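/- Let τ > 0, σ ∈ ℝ, and x ∈ ℂ with 2τσ + |x|² ≤ τ². Then (0, 0) = argmin over (ξ, s) ∈ ℂ × ℝ of φ(ξ, s) + (1/(2τ))(|x − ξ|² + (σ − s)²), where φ(ξ,s) = |ξ|²/(2s) + s/2 for s > 0, φ(0,0) = 0, ∞ otherwise. -/

import Mathlib

/-! Off `s > 0` the perspective function is `⊤` except at the origin. For `s > 0` the reverse
triangle inequality `|‖x‖ - ‖ξ‖| ≤ ‖x - ξ‖` reduces the comparison to one between reals, where the
gap over the value at the origin is `((τ‖ξ‖ - s‖x‖)² + sτ(‖ξ‖² + s²) + s²(τ² - ‖x‖² - 2τσ)) / (2τ²s)`,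
positive because `s > 0` and the last summand is nonnegative by hypothesis. -/

noncomputable def phi (x : ℂ) (σ : ℝ) : EReal :=
  if 0 < σ then ((‖x‖ ^ 2 / (2 * σ) + σ / 2 : ℝ) : EReal)
  else if x = 0 ∧ σ = 0 then 0 else ⊤

noncomputable def proxObjective (τ : ℝ) (x : ℂ) (σ : ℝ) (ξ : ℂ) (s : ℝ) : EReal :=
  phi ξ s + (((‖x - ξ‖ ^ 2 + (σ - s) ^ 2) / (2 * τ) : ℝ) : EReal)

lemma phi_of_pos {s : ℝ} (hs : 0 < s) (ξ : ℂ) :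
    phi ξ s = ((‖ξ‖ ^ 2 / (2 * s) + s / 2 : ℝ) : EReal) :=
  if_pos hs

lemma phi_eq_top {ξ : ℂ} {s : ℝ} (hs : ¬0 < s) (hne : (ξ, s) ≠ (0, 0)) : phi ξ s = ⊤ := by
  rw [phi, if_neg hs, if_neg (by simpa only [ne_eq, Prod.mk.injEq] using hne)]

lemma proxObjective_zero_zero (τ : ℝ) (x : ℂ) (σ : ℝ) :
    proxObjective τ x σ 0 0 = (((‖x‖ ^ 2 + σ ^ 2) / (2 * τ) : ℝ) : EReal) := by
  simp [proxObjective, phi]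

lemma sq_add_sq_div_lt_of_pos {τ a σ b s : ℝ} (hτ : 0 < τ) (h : 2 * τ * σ + a ^ 2 ≤ τ ^ 2)
    (hs : 0 < s) :
    (a ^ 2 + σ ^ 2) / (2 * τ) <
      b ^ 2 / (2 * s) + s / 2 + ((a - b) ^ 2 + (σ - s) ^ 2) / (2 * τ) := by
  rw [← sub_pos]
  have gap : b ^ 2 / (2 * s) + s / 2 + ((a - b) ^ 2 + (σ - s) ^ 2) / (2 * τ)
      - (a ^ 2 + σ ^ 2) / (2 * τ)
      = ((τ * b - s * a) ^ 2 + s * τ * (b ^ 2 + s ^ 2)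
          + s ^ 2 * (τ ^ 2 - a ^ 2 - 2 * τ * σ)) / (2 * τ ^ 2 * s) := by
    field_simp
    ring
  rw [gap]
  have hsτ : 0 < s * τ * (b ^ 2 + s ^ 2) := by positivity
  have hcond : 0 ≤ s ^ 2 * (τ ^ 2 - a ^ 2 - 2 * τ * σ) :=
    mul_nonneg (sq_nonneg s) (by linarith)
  have := sq_nonneg (τ * b - s * a)
  positivity

lemma proxObjective_zero_lt {τ σ : ℝ} {x : ℂ} (hτ : 0 < τ) (h : 2 * τ * σ + ‖x‖ ^ 2 ≤ τ ^ 2)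
    {ξ : ℂ} {s : ℝ} (hne : (ξ, s) ≠ (0, 0)) :
    proxObjective τ x σ 0 0 < proxObjective τ x σ ξ s := by
  rw [proxObjective_zero_zero]
  by_cases hs : 0 < s
  · rw [proxObjective, phi_of_pos hs, ← EReal.coe_add, EReal.coe_lt_coe_iff]
    have hnorm : (‖x‖ - ‖ξ‖) ^ 2 ≤ ‖x - ξ‖ ^ 2 := by
      rw [← sq_abs]
      exact pow_le_pow_left₀ (abs_nonneg _) (abs_norm_sub_norm_le x ξ) 2
    calc (‖x‖ ^ 2 + σ ^ 2) / (2 * τ)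
        < ‖ξ‖ ^ 2 / (2 * s) + s / 2 + ((‖x‖ - ‖ξ‖) ^ 2 + (σ - s) ^ 2) / (2 * τ) :=
          sq_add_sq_div_lt_of_pos hτ h hs
      _ ≤ ‖ξ‖ ^ 2 / (2 * s) + s / 2 + (‖x - ξ‖ ^ 2 + (σ - s) ^ 2) / (2 * τ) := by
          gcongr
  · rw [proxObjective, phi_eq_top hs hne, EReal.top_add_of_ne_bot (EReal.coe_ne_bot _)]
    exact EReal.coe_lt_top _

lemma proxObjective_zero_le {τ σ : ℝ} {x : ℂ} (hτ : 0 < τ) (h : 2 * τ * σ + ‖x‖ ^ 2 ≤ τ ^ 2)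
    (ξ : ℂ) (s : ℝ) : proxObjective τ x σ 0 0 ≤ proxObjective τ x σ ξ s := by
  obtain h0 | hne := eq_or_ne (ξ, s) (0, 0)
  · obtain ⟨rfl, rfl⟩ := Prod.mk.inj h0
    exact le_rfl
  · exact (proxObjective_zero_lt hτ h hne).le

theorem prox_case1 (τ : ℝ) (hτ : 0 < τ) (x : ℂ) (σ : ℝ)
    (h : 2 * τ * σ + ‖x‖ ^ 2 ≤ τ ^ 2) :
    (∀ (ξ : ℂ) (s : ℝ),
      phi 0 0 + (((‖x - 0‖ ^ 2 + (σ - 0) ^ 2) / (2 * τ) : ℝ) : EReal) ≤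
        phi ξ s + (((‖x - ξ‖ ^ 2 + (σ - s) ^ 2) / (2 * τ) : ℝ) : EReal)) ∧
    ∀ (ξ : ℂ) (s : ℝ), (ξ, s) ≠ ((0 : ℂ), (0 : ℝ)) →
      phi 0 0 + (((‖x - 0‖ ^ 2 + (σ - 0) ^ 2) / (2 * τ) : ℝ) : EReal) <
        phi ξ s + (((‖x - ξ‖ ^ 2 + (σ - s) ^ 2) / (2 * τ) : ℝ) : EReal) :=
  ⟨proxObjective_zero_le hτ h, fun _ _ => proxObjective_zero_lt hτ h⟩
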